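/- arXiv:2002.07737 — 3 statements merged into one kernel-verified Lean document; each statement's English description precedes it below -/
import Mathlib

section
/- Let π: X → B be an oriented S^4-bundle with fiber integration π_*, and let χ, p ∈ H^•(X;ℝ), b ∈ H^4(B;ℝ) satisfy: π_*(χ^2) = 0, π_*(χ) = 2, p = π^*q for some q ∈ H^8(B;ℝ), and ((1/2)χ + π^*b) ⌣ ((1/2)χ + π^*b) = (1/4)p. Then b = 0. -/
/-- Main anomaly-vanishing computation. For an oriented
`S⁴`-bundle with fiber integration `π_*` (projection formula, `π_*(π^*α)=0`),
if `π_*(χ²) = 0`, `π_*(χ) = 2`, `p = π^*q` for some `q ∈ H⁸(B;ℝ)`, and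
`((1/2)χ + π^*b) ⌣ ((1/2)χ + π^*b) = (1/4)p`, then `b = 0`. -/
theorem basic_component_vanishes
    {HX HB : Type*} [CommRing HX] [CommRing HB] [Algebra ℝ HX] [Algebra ℝ HB]
    (pull : HB →+* HX)          -- π^*
    (push : HX →ₗ[ℝ] HB)        -- π_*
    (proj_formula : ∀ (α : HB) (β : HX), push (pull α * β) = α * push β)
    (push_pull : ∀ α : HB, push (pull α) = 0)
    (χ p : HX) (b : HB)
    (push_χsq : push (χ ^ 2) = 0) (push_χ : push χ = 2)
    (q : HB) (p_basic : p = pull q)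
    (flux_quantization :
      ((1/2 : ℝ) • χ + pull b) * ((1/2 : ℝ) • χ + pull b) = (1/4 : ℝ) • p) :
    b = 0 := by
  have expand : ((1/2 : ℝ) • χ + pull b) * ((1/2 : ℝ) • χ + pull b)
      = (1/4 : ℝ) • χ ^ 2 + pull b * χ + pull (b * b) := by
    rw [map_mul]; ring_nf
    rw [smul_pow, smul_mul_assoc]; ring_nf
    rw [smul_mul_assoc, mul_two, ← two_smul ℝ, smul_smul]; norm_num; ring
  rw [expand, p_basic] at flux_quantization
  have h := congrArg push flux_quantization
  simp only [map_add, map_smul, push_χsq, push_pull, proj_formula, push_χ,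
    smul_zero, zero_add, add_zero] at h
  have h2 : (2 : ℝ) • b = 0 := by
    have : b * 2 = (2 : ℝ) • b := by
      rw [mul_comm]
      simp [two_smul, two_mul]
    rwa [this] at h
  have := congrArg (fun x => (1/2 : ℝ) • x) h2
  simpa [smul_smul] using this
end

section
/- Let A, B be commutative rings, π^* : B → A a ring homomorphism making A a B-algebra, and π_* : A → B a B-module homomorphism with π_*(1) = 0. Suppose χ ∈ A and b ∈ B satisfy π_*(χ) = 2, π_*(χ^2) = 0, and ((1/2)·χ + π^*(b))^2 = (1/4)·π^*(q) for some q ∈ B, where B is a ℚ-algebra. Then b = 0. -/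
/-- Purely algebraic abstraction of the main theorem. `A`, `B`
commutative rings (`B` a `ℚ`-algebra, `A` an algebra over it), `π^* : B → A`
a ring hom, `π_* : A → B` a `B`-module map (projection formula) with
`π_*(1) = 0`. If `χ ∈ A`, `b ∈ B` satisfy `π_*(χ) = 2`, `π_*(χ²) = 0`, and
`((1/2)·χ + π^*(b))² = (1/4)·π^*(q)` for some `q ∈ B`, then `b = 0`. -/
theorem algebraic_basic_component_vanishes
    {A B : Type*} [CommRing A] [CommRing B] [Algebra ℚ A] [Algebra ℚ B]
    (pull : B →+* A)            -- π^*
    (push : A →ₗ[ℚ] B)          -- π_*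
    (proj_formula : ∀ (β : B) (a : A), push (pull β * a) = β * push a)
    (push_one : push 1 = 0)
    (χ : A) (b : B)
    (push_χ : push χ = 2) (push_χsq : push (χ ^ 2) = 0)
    (q : B)
    (flux_quantization :
      ((1/2 : ℚ) • χ + pull b) ^ 2 = (1/4 : ℚ) • pull q) :
    b = 0 := by
  have hpp : ∀ β : B, push (pull β) = 0 := fun β => by
    have h := proj_formula β 1
    rw [mul_one] at h
    rw [h, push_one, mul_zero]
  have expand : ((1/2 : ℚ) • χ + pull b) ^ 2
      = (1/4 : ℚ) • χ ^ 2 + pull b * χ + pull (b * b) := by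
    simp only [Algebra.smul_def, map_mul]
    have h2 : (algebraMap ℚ A) (1/4) = (algebraMap ℚ A) (1/2) * (algebraMap ℚ A) (1/2) := by
      rw [← map_mul]; norm_num
    have h1 : (algebraMap ℚ A) (1/2) * 2 = 1 := by
      rw [show (2:A) = (algebraMap ℚ A) 2 from (map_ofNat _ 2).symm, ← map_mul]; norm_num
    linear_combination (-(χ ^ 2)) * h2 + (χ * pull b) * h1
  have key := congrArg push flux_quantization
  rw [expand, map_add, map_add, map_smul, map_smul] at key
  simp only [hpp, push_χsq, proj_formula, push_χ, smul_zero, zero_add, add_zero] at key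
  -- key : b * 2 = 0
  have hb : (2 : ℚ) • b = 0 := by
    rw [Algebra.smul_def, map_ofNat]
    rw [mul_comm]; exact key
  calc b = ((1/2 : ℚ) * 2) • b := by norm_num
    _ = (1/2 : ℚ) • ((2 : ℚ) • b) := by rw [mul_smul]
    _ = 0 := by rw [hb, smul_zero]
end

section
/- Let π: X → B be an oriented S^4-bundle associated to a rank-5 oriented vector bundle N over B, with vertical Euler class χ and p_2 = p_2(N) ∈ H^8(B;ℝ). If a class G ∈ H^4(X;ℝ) satisfies G ⌣ G = (1/4)π^*p_2 and π_*(G) = 1, then writing G = (1/2)χ + π^*b (Gysin), one obtains 0 = π_*(G ⌣ G) = 2b, hence G = (1/2)χ exactly. -/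
/-- Main theorem, Theorem 3.2: For the oriented `S⁴`-bundle
`π : X → B` associated to a rank-5 oriented vector bundle `N` over `B`, with
vertical Euler class `χ` (`π_*(χ) = 2`, `π_*(χ²) = 0`) and
`p₂ = p₂(N) ∈ H⁸(B;ℝ)`, if `G ∈ H⁴(X;ℝ)` satisfies the Cohomotopy
charge-quantization `G ⌣ G = (1/4)π^*p₂` and `π_*(G) = 1`, then writing
`G = (1/2)χ + π^*b` (Gysin), one obtains `0 = π_*(G ⌣ G) = 2b`, hence `b = 0`
and `G = (1/2)χ` exactly. -/
theorem M5_anomaly_basic_flux_vanishes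
    {HX HB : Type*} [CommRing HX] [CommRing HB] [Algebra ℝ HX] [Algebra ℝ HB]
    (pull : HB →+* HX)          -- π^*
    (push : HX →ₗ[ℝ] HB)        -- π_*
    (proj_formula : ∀ (α : HB) (β : HX), push (pull α * β) = α * push β)
    (push_pull : ∀ α : HB, push (pull α) = 0)
    (χ : HX) (p₂ : HB)
    (push_χ : push χ = 2) (push_χsq : push (χ ^ 2) = 0)
    (G : HX)
    (flux_quantization : G * G = (1/4 : ℝ) • pull p₂)
    (unit_flux : push G = 1)
    (b : HB) (gysin_decomp : G = (1/2 : ℝ) • χ + pull b) :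
    push (G * G) = 0 ∧ push (G * G) = 2 * b ∧ b = 0 ∧ G = (1/2 : ℝ) • χ := by

  have h0 : push (G * G) = 0 := by
    rw [flux_quantization, map_smul, push_pull, smul_zero]
  have key : (algebraMap ℝ HX) (1/2 : ℝ) * 2 = 1 := by
    rw [show (2 : HX) = algebraMap ℝ HX 2 by rw [map_ofNat], ← map_mul]
    norm_num
  have expand : G * G = (1/4 : ℝ) • (χ ^ 2) + pull b * χ + pull b * pull b := by
    rw [gysin_decomp, Algebra.smul_def, Algebra.smul_def,
        show (1/4 : ℝ) = (1/2) * (1/2) by norm_num, map_mul]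
    linear_combination (χ * pull b) * key
  have h2 : push (G * G) = 2 * b := by
    rw [expand, map_add, map_add, map_smul, push_χsq, smul_zero,
        proj_formula, proj_formula, push_χ, push_pull b]
    ring
  have hb : b = 0 := by
    have h : (0 : HB) = 2 * b := h0.symm.trans h2
    calc b = (1/2 : ℝ) • (2 * b) := by
            rw [two_mul, smul_add, ← add_smul]; norm_num
      _ = 0 := by rw [← h, smul_zero]
  refine ⟨h0, h2, hb, ?_⟩
  rw [gysin_decomp, hb, map_zero, add_zero]
end
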